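/- Let A be a σ-dictionary (σ ≥ 1) with columns a¹,…,a^m ∈ ℝⁿ, let k ≥ 1 be an integer and ε > 0, and set ε' = ε·e^{−2kε}. Let L be a degree-2(1+k) pseudoexpectation on ℝ[u₁,…,u_n] that satisfies the constraint {‖u‖₂² = 1}. If L(Σ_{i=1}^m ⟨aⁱ,u⟩^{2(1+k)}) > (1+ε)·e^{−2kε}·σ, then there exists a column c ∈ {a¹,…,a^m} such that both L(⟨c,u⟩^{2(1+k)}) ≥ e^{−2εk}·L(⟨c,u⟩²) and L(⟨c,u⟩²) ≥ ε'/m. -/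

import Mathlib

open MvPolynomial

/-- A degree-`k` pseudoexpectation on `ℝ[u₁,…,u_n]`: a linear functional with `L 1 = 1`
and `L (P²) ≥ 0` whenever `deg (P²) ≤ k`. -/
def IsPseudoExpectation (n k : ℕ) (L : MvPolynomial (Fin n) ℝ → ℝ) : Prop :=
  (∀ P Q : MvPolynomial (Fin n) ℝ, L (P + Q) = L P + L Q) ∧
  (∀ (c : ℝ) (P : MvPolynomial (Fin n) ℝ), L (c • P) = c * L P) ∧
  L 1 = 1 ∧
  ∀ P : MvPolynomial (Fin n) ℝ, (P ^ 2).totalDegree ≤ k → 0 ≤ L (P ^ 2)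

/-- `L` satisfies the constraint `{P = 0}`: `L (P·Q) = 0` for every `Q` with
`deg (P·Q) ≤ k`. -/
def SatisfiesZero (n k : ℕ) (L : MvPolynomial (Fin n) ℝ → ℝ)
    (P : MvPolynomial (Fin n) ℝ) : Prop :=
  ∀ Q : MvPolynomial (Fin n) ℝ, (P * Q).totalDegree ≤ k → L (P * Q) = 0

/-!
Cauchy–Schwarz makes `‖u‖² - ⟨c,u⟩²` a sum of squares of linear forms for every unit vector `c`,
and the square root of the positive semidefinite matrix `σ·Id - AᵀA` does the same for
`σ‖u‖² - ∑ᵢ ⟨aⁱ,u⟩²`. Multiplying the first by `⟨c,u⟩^(2j)` and using `‖u‖² = 1` shows that the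
even moments `L ⟨c,u⟩^(2j)` decrease in `j`, while the second gives `∑ᵢ L ⟨aⁱ,u⟩² ≤ σ`.
If no column satisfied both conclusions, every `L ⟨aⁱ,u⟩^(2(1+k))` would be below
`e^(-2kε) L ⟨aⁱ,u⟩² + ε'/m`, and summing over `i` would contradict the hypothesis.
-/

open scoped Matrix

section LinearForms

variable {ν : Type*} [Fintype ν]

noncomputable def linForm (c : ν → ℝ) : MvPolynomial ν ℝ := ∑ j, C (c j) * X j

noncomputable def quadForm (M : Matrix ν ν ℝ) : MvPolynomial ν ℝ :=
  ∑ j, ∑ j', C (M j j') * (X j * X j')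

noncomputable def sqNorm (ν : Type*) [Fintype ν] : MvPolynomial ν ℝ := ∑ j, X j ^ 2

lemma totalDegree_linForm_le (c : ν → ℝ) : (linForm c).totalDegree ≤ 1 := by
  refine (totalDegree_finsetSum _ _).trans (Finset.sup_le fun j _ => ?_)
  exact (totalDegree_mul _ _).trans (by simp [totalDegree_X])

lemma totalDegree_linForm_pow_le (c : ν → ℝ) (d : ℕ) : (linForm c ^ d).totalDegree ≤ d :=
  (totalDegree_pow _ _).trans <| by simpa using Nat.mul_le_mul_left d (totalDegree_linForm_le c)

lemma totalDegree_sqNorm_sub_one_le : (sqNorm ν - 1).totalDegree ≤ 2 := by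
  have hsq : (sqNorm ν).totalDegree ≤ 2 := by
    refine (totalDegree_finsetSum _ _).trans (Finset.sup_le fun j _ => ?_)
    exact (totalDegree_pow _ _).trans (by simp [totalDegree_X])
  rw [sub_eq_add_neg]
  exact (totalDegree_add _ _).trans (max_le hsq (by simp))

lemma linForm_sq (c : ν → ℝ) :
    linForm c ^ 2 = ∑ j, ∑ j', C (c j * c j') * (X j * X j') := by
  simp only [linForm, sq, Finset.sum_mul_sum, map_mul]
  exact Finset.sum_congr rfl fun _ _ => Finset.sum_congr rfl fun _ _ => by ring

lemma quadForm_sub (M N : Matrix ν ν ℝ) : quadForm (M - N) = quadForm M - quadForm N := by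
  simp only [quadForm, Matrix.sub_apply, map_sub, sub_mul, Finset.sum_sub_distrib]

lemma quadForm_smul_one [DecidableEq ν] (c : ℝ) :
    quadForm (c • 1 : Matrix ν ν ℝ) = C c * sqNorm ν := by
  simp [quadForm, sqNorm, Matrix.one_apply, Finset.mul_sum, sq, apply_ite C, ite_mul]

lemma quadForm_transpose_mul_self {ι : Type*} [Fintype ι] (B : Matrix ι ν ℝ) :
    quadForm (Bᵀ * B) = ∑ l, linForm (B l) ^ 2 := by
  simp only [quadForm, linForm_sq, Matrix.mul_apply, Matrix.transpose_apply, map_sum,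
    Finset.sum_mul]
  exact (Finset.sum_congr rfl fun _ _ => Finset.sum_comm).trans Finset.sum_comm

lemma posSemidef_smul_one_sub_transpose_mul_self [DecidableEq ν] {ι : Type*} [Fintype ι]
    (g : ι → ν → ℝ) {c : ℝ} (hg : ∀ x : ν → ℝ, ∑ i, (∑ j, g i j * x j) ^ 2 ≤ c * ∑ j, x j ^ 2) :
    (c • 1 - (Matrix.of g)ᵀ * Matrix.of g).PosSemidef := by
  refine Matrix.PosSemidef.of_dotProduct_mulVec_nonneg ?_ fun x => ?_
  · exact (Matrix.isHermitian_one.smul (IsSelfAdjoint.all c)).sub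
      (by simpa using Matrix.isHermitian_conjTranspose_mul_self (Matrix.of g))
  · have hform : star x ⬝ᵥ (c • 1 - (Matrix.of g)ᵀ * Matrix.of g) *ᵥ x
        = c * ∑ j, x j ^ 2 - ∑ i, (∑ j, g i j * x j) ^ 2 := by
      rw [Matrix.sub_mulVec, ← Matrix.mulVec_mulVec, dotProduct_sub,
        Matrix.dotProduct_mulVec (star x) (Matrix.of g)ᵀ, Matrix.vecMul_transpose]
      simp [dotProduct, Matrix.mulVec, Matrix.one_apply, sq, Finset.mul_sum, mul_comm,
        mul_left_comm]
    linarith [hg x]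

lemma exists_C_mul_sqNorm_sub_sum_linForm_sq_eq_sum_sq {ι : Type*} [Fintype ι]
    (g : ι → ν → ℝ) {c : ℝ} (hg : ∀ x : ν → ℝ, ∑ i, (∑ j, g i j * x j) ^ 2 ≤ c * ∑ j, x j ^ 2) :
    ∃ B : Matrix ν ν ℝ, C c * sqNorm ν - ∑ i, linForm (g i) ^ 2 = ∑ l, linForm (B l) ^ 2 := by
  classical
  open scoped MatrixOrder in
  obtain ⟨B, hB⟩ := CStarAlgebra.nonneg_iff_eq_star_mul_self.mp
    (posSemidef_smul_one_sub_transpose_mul_self g hg).nonneg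
  refine ⟨B, ?_⟩
  have h := congrArg quadForm hB
  rwa [quadForm_sub, quadForm_smul_one, quadForm_transpose_mul_self, Matrix.star_eq_conjTranspose,
    Matrix.conjTranspose_eq_transpose_of_trivial, quadForm_transpose_mul_self] at h

lemma exists_sqNorm_sub_linForm_sq_eq_sum_sq {a : ν → ℝ} (ha : ∑ j, a j ^ 2 = 1) :
    ∃ B : Matrix ν ν ℝ, sqNorm ν - linForm a ^ 2 = ∑ l, linForm (B l) ^ 2 := by
  have hcs : ∀ x : ν → ℝ, ∑ _i : Unit, (∑ j, a j * x j) ^ 2 ≤ 1 * ∑ j, x j ^ 2 := fun x => by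
    simpa [ha] using Finset.sum_mul_sq_le_sq_mul_sq Finset.univ a x
  simpa using exists_C_mul_sqNorm_sub_sum_linForm_sq_eq_sum_sq (fun _ : Unit => a) hcs

end LinearForms

namespace IsPseudoExpectation

variable {n K : ℕ} {L : MvPolynomial (Fin n) ℝ → ℝ} (hL : IsPseudoExpectation n K L)
include hL

noncomputable def toLinearMap : MvPolynomial (Fin n) ℝ →ₗ[ℝ] ℝ where
  toFun := L
  map_add' := hL.1
  map_smul' := hL.2.1

lemma map_sum {ι : Type*} (s : Finset ι) (f : ι → MvPolynomial (Fin n) ℝ) :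
    L (∑ i ∈ s, f i) = ∑ i ∈ s, L (f i) :=
  _root_.map_sum hL.toLinearMap f s

lemma map_sub (P Q : MvPolynomial (Fin n) ℝ) : L (P - Q) = L P - L Q :=
  _root_.map_sub hL.toLinearMap P Q

lemma map_linForm_sq_nonneg (hK : 2 ≤ K) (c : Fin n → ℝ) : 0 ≤ L (linForm c ^ 2) :=
  hL.2.2.2 _ <| (totalDegree_linForm_pow_le c 2).trans hK

lemma map_sum_linForm_sq_nonneg (hK : 2 ≤ K) {ι : Type*} [Fintype ι] (B : ι → Fin n → ℝ) :
    0 ≤ L (∑ l, linForm (B l) ^ 2) := by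
  rw [hL.map_sum]
  exact Finset.sum_nonneg fun l _ => hL.map_linForm_sq_nonneg hK (B l)

variable (hS : SatisfiesZero n K L (sqNorm (Fin n) - 1))
include hS

lemma map_mul_sqNorm {q : MvPolynomial (Fin n) ℝ} (hq : q.totalDegree + 2 ≤ K) :
    L (q * sqNorm (Fin n)) = L q := by
  have h := hS q <| (totalDegree_mul _ _).trans <| by
    linarith [totalDegree_sqNorm_sub_one_le (ν := Fin n)]
  rw [show q * sqNorm (Fin n) = (sqNorm (Fin n) - 1) * q + q by ring, hL.1, h, zero_add]

lemma map_sqNorm (hK : 2 ≤ K) : L (sqNorm (Fin n)) = 1 := by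
  simpa [hL.2.2.1] using hL.map_mul_sqNorm hS (q := 1) (by simpa using hK)

lemma sum_map_linForm_sq_le (hK : 2 ≤ K) {ι : Type*} [Fintype ι] (g : ι → Fin n → ℝ) {c : ℝ}
    (hg : ∀ x : Fin n → ℝ, ∑ i, (∑ j, g i j * x j) ^ 2 ≤ c * ∑ j, x j ^ 2) :
    ∑ i, L (linForm (g i) ^ 2) ≤ c := by
  obtain ⟨B, hB⟩ := exists_C_mul_sqNorm_sub_sum_linForm_sq_eq_sum_sq g hg
  have h := hL.map_sum_linForm_sq_nonneg hK B
  rw [← hB, hL.map_sub, hL.map_sum, ← smul_eq_C_mul, hL.2.1, hL.map_sqNorm hS hK] at h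
  linarith

lemma map_linForm_pow_succ_le {a : Fin n → ℝ} (ha : ∑ j, a j ^ 2 = 1) {j : ℕ}
    (hj : 2 * (j + 2) ≤ K) :
    L (linForm a ^ (2 * (j + 2))) ≤ L (linForm a ^ (2 * (j + 1))) := by
  obtain ⟨B, hB⟩ := exists_sqNorm_sub_linForm_sq_eq_sum_sq ha
  have hsos : 0 ≤ L (linForm a ^ (2 * (j + 1)) * (sqNorm (Fin n) - linForm a ^ 2)) := by
    rw [hB, Finset.mul_sum]
    simp_rw [show ∀ l, linForm a ^ (2 * (j + 1)) * linForm (B l) ^ 2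
      = (linForm a ^ (j + 1) * linForm (B l)) ^ 2 from fun l => by ring]
    rw [hL.map_sum]
    refine Finset.sum_nonneg fun l _ => hL.2.2.2 _ <| (totalDegree_pow _ _).trans ?_
    have := (totalDegree_mul (linForm a ^ (j + 1)) (linForm (B l))).trans
      (add_le_add (totalDegree_linForm_pow_le a (j + 1)) (totalDegree_linForm_le (B l)))
    omega
  have hmul : L (linForm a ^ (2 * (j + 1)) * sqNorm (Fin n)) = L (linForm a ^ (2 * (j + 1))) :=
    hL.map_mul_sqNorm hS <| by linarith [totalDegree_linForm_pow_le a (2 * (j + 1))]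
  rw [mul_sub, hL.map_sub, hmul, ← pow_add] at hsos
  rw [show 2 * (j + 2) = 2 * (j + 1) + 2 by ring]
  linarith

lemma map_linForm_pow_le_sq {a : Fin n → ℝ} (ha : ∑ j, a j ^ 2 = 1) {j : ℕ}
    (hj : 2 * (j + 1) ≤ K) :
    L (linForm a ^ (2 * (j + 1))) ≤ L (linForm a ^ 2) := by
  induction j with
  | zero => simp
  | succ j ih => exact (hL.map_linForm_pow_succ_le hS ha hj).trans (ih (by omega))

end IsPseudoExpectation

lemma exists_mul_le_and_div_le_of_lt_sum {ι : Type*} [Fintype ι] {v w : ι → ℝ} {σ ε β : ℝ}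
    (hv : ∀ i, 0 ≤ v i) (hwv : ∀ i, w i ≤ v i) (hsum : ∑ i, v i ≤ σ) (hσ : 1 ≤ σ)
    (hε : 0 ≤ ε) (hβ : 0 ≤ β) (hbig : (1 + ε) * β * σ < ∑ i, w i) :
    ∃ i, β * v i ≤ w i ∧ ε * β / Fintype.card ι ≤ v i := by
  set δ := ε * β / Fintype.card ι
  have hδ : 0 ≤ δ := by positivity
  have hδsum : ∑ _i : ι, δ ≤ ε * β := by
    rw [Finset.sum_const, Finset.card_univ, nsmul_eq_mul]
    rcases eq_or_ne (Fintype.card ι) 0 with h | h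
    · simp [h]
      positivity
    · rw [mul_div_cancel₀ _ (by exact_mod_cast h)]
  have hlt : ∑ i, (β * v i + δ) < ∑ i, w i := calc
    ∑ i, (β * v i + δ) = β * ∑ i, v i + ∑ _i : ι, δ := by
      rw [Finset.sum_add_distrib, Finset.mul_sum]
    _ ≤ β * σ + ε * β * σ := by
      gcongr
      nlinarith [mul_nonneg hε hβ]
    _ = (1 + ε) * β * σ := by ring
    _ < ∑ i, w i := hbig
  obtain ⟨i, -, hi⟩ := Finset.exists_lt_of_sum_lt hlt
  exact ⟨i, by linarith, by linarith [mul_nonneg hβ (hv i), hwv i]⟩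

theorem stmt18_general (n m : ℕ) (σ : ℝ) (hσ : 1 ≤ σ)
    (a : Fin m → Fin n → ℝ)
    (hunit : ∀ i, ∑ j, a i j ^ 2 = 1)
    (hdict : ∀ u : Fin n → ℝ, ∑ i, (∑ j, a i j * u j) ^ 2 ≤ σ * ∑ j, u j ^ 2)
    (k : ℕ) (ε : ℝ) (hε : 0 < ε)
    (L : MvPolynomial (Fin n) ℝ → ℝ)
    (hL : IsPseudoExpectation n (2 * (1 + k)) L)
    (hconstr : SatisfiesZero n (2 * (1 + k)) L ((∑ j, X j ^ 2) - 1))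
    (hbig : (1 + ε) * Real.exp (-(2 * k * ε)) * σ <
      L (∑ i, (∑ j, C (a i j) * X j) ^ (2 * (1 + k)))) :
    ∃ i : Fin m,
      Real.exp (-(2 * ε * k)) * L ((∑ j, C (a i j) * X j) ^ 2) ≤
        L ((∑ j, C (a i j) * X j) ^ (2 * (1 + k))) ∧
      ε * Real.exp (-(2 * k * ε)) / m ≤ L ((∑ j, C (a i j) * X j) ^ 2) := by
  rw [add_comm 1 k] at hL hconstr hbig ⊢
  have hK : 2 ≤ 2 * (k + 1) := by omega
  obtain ⟨i, hmoment, hmass⟩ := exists_mul_le_and_div_le_of_lt_sum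
    (v := fun i => L (linForm (a i) ^ 2)) (w := fun i => L (linForm (a i) ^ (2 * (k + 1))))
    (fun i => hL.map_linForm_sq_nonneg hK (a i))
    (fun i => hL.map_linForm_pow_le_sq hconstr (hunit i) le_rfl)
    (hL.sum_map_linForm_sq_le hconstr hK a hdict) hσ hε.le (Real.exp_pos _).le
    (by rwa [← hL.map_sum])
  refine ⟨i, ?_, ?_⟩
  · rwa [mul_right_comm 2 ε]
  · rwa [Fintype.card_fin] at hmass

/-- If a degree-`2(1+k)` pseudoexpectation `L` satisfying `{‖u‖₂² = 1}` has
`L ‖Aᵀu‖_{2(1+k)}^{2(1+k)} > (1+ε) e^{-2kε} σ` for a `σ`-dictionary `A`, then some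
column `c` satisfies `L ⟨c,u⟩^{2(1+k)} ≥ e^{-2εk} L ⟨c,u⟩²` and `L ⟨c,u⟩² ≥ ε'/m`
with `ε' = ε e^{-2kε}`. -/
theorem stmt18 (n m : ℕ) (hm : 0 < m) (σ : ℝ) (hσ : 1 ≤ σ)
    (a : Fin m → Fin n → ℝ)
    (hunit : ∀ i, ∑ j, a i j ^ 2 = 1)
    (hdict : ∀ u : Fin n → ℝ, ∑ i, (∑ j, a i j * u j) ^ 2 ≤ σ * ∑ j, u j ^ 2)
    (k : ℕ) (hk : 1 ≤ k) (ε : ℝ) (hε : 0 < ε)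
    (L : MvPolynomial (Fin n) ℝ → ℝ)
    (hL : IsPseudoExpectation n (2 * (1 + k)) L)
    (hconstr : SatisfiesZero n (2 * (1 + k)) L ((∑ j, X j ^ 2) - 1))
    (hbig : (1 + ε) * Real.exp (-(2 * k * ε)) * σ <
      L (∑ i, (∑ j, C (a i j) * X j) ^ (2 * (1 + k)))) :
    ∃ i : Fin m,
      Real.exp (-(2 * ε * k)) * L ((∑ j, C (a i j) * X j) ^ 2) ≤
        L ((∑ j, C (a i j) * X j) ^ (2 * (1 + k))) ∧
      ε * Real.exp (-(2 * k * ε)) / m ≤ L ((∑ j, C (a i j) * X j) ^ 2) :=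
  stmt18_general n m σ hσ a hunit hdict k ε hε L hL hconstr hbig
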